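/- ∑_{k=1}^{16} Π_k = (1/2 : ℂ) • M₃ + (2 : ℂ) • (1 : Matrix (Fin 3 → Fin 2) (Fin 3 → Fin 2) ℂ). (This is the operator identity μ₃ = M₃/2 + 2^{n−2} for n = 3 expressing the contextuality witness μ₃, the sum of the positive-sign projectors in the MABK expansion, in terms of the MABK operator.) -/

import Mathlib

open Matrix BigOperators

noncomputable section

/-- Pauli X matrix. -/
def pauliX : Matrix (Fin 2) (Fin 2) ℂ := !![0, 1; 1, 0]

/-- Pauli Y matrix. -/
def pauliY : Matrix (Fin 2) (Fin 2) ℂ := !![0, -Complex.I; Complex.I, 0]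

/-- n-fold tensor (Kronecker) product of a family of 2×2 matrices,
defined entrywise by `T(A) f g = ∏ j, (A j) (f j) (g j)`. -/
def tensor {n : ℕ} (A : Fin n → Matrix (Fin 2) (Fin 2) ℂ) :
    Matrix (Fin n → Fin 2) (Fin n → Fin 2) ℂ :=
  Matrix.of fun f g => ∏ j, A j (f j) (g j)

/-- The n-partite MABK operator
`M_n = (1/(2i)) (⊗ⱼ (X + iY) − ⊗ⱼ (X − iY))`. -/
def MABK (n : ℕ) : Matrix (Fin n → Fin 2) (Fin n → Fin 2) ℂ :=
  (1 / (2 * Complex.I)) •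
    (tensor (fun _ : Fin n => pauliX + Complex.I • pauliY)
      - tensor (fun _ : Fin n => pauliX - Complex.I • pauliY))

/-- The n-qubit GHZ state `(|0…0⟩ + i|1…1⟩)/√2`. -/
def GHZ (n : ℕ) : (Fin n → Fin 2) → ℂ :=
  fun f =>
    if f = fun _ => 0 then 1 / (Real.sqrt 2 : ℂ)
    else if f = fun _ => 1 then Complex.I / (Real.sqrt 2 : ℂ)
    else 0

/-- The phase-flipped n-qubit GHZ state `(|0…0⟩ − i|1…1⟩)/√2`. -/
def GHZ' (n : ℕ) : (Fin n → Fin 2) → ℂ :=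
  fun f =>
    if f = fun _ => 0 then 1 / (Real.sqrt 2 : ℂ)
    else if f = fun _ => 1 then -Complex.I / (Real.sqrt 2 : ℂ)
    else 0

/-- Projector onto the +1 eigenstate of Pauli X. -/
def Ppx : Matrix (Fin 2) (Fin 2) ℂ := (1 / 2 : ℂ) • (1 + pauliX)

/-- Projector onto the −1 eigenstate of Pauli X. -/
def Pmx : Matrix (Fin 2) (Fin 2) ℂ := (1 / 2 : ℂ) • (1 - pauliX)

/-- Projector onto the +1 eigenstate of Pauli Y. -/
def Ppy : Matrix (Fin 2) (Fin 2) ℂ := (1 / 2 : ℂ) • (1 + pauliY)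

/-- Projector onto the −1 eigenstate of Pauli Y. -/
def Pmy : Matrix (Fin 2) (Fin 2) ℂ := (1 / 2 : ℂ) • (1 - pauliY)

/-- The sixteen rank-one projectors Π₁,…,Π₁₆ of the contextuality witness μ₃
(indexed by `Fin 16`, so `Proj3 k` is Π_{k+1}). -/
def Proj3 : Fin 16 → Matrix (Fin 3 → Fin 2) (Fin 3 → Fin 2) ℂ :=
  ![tensor ![Pmy, Ppy, Ppy], tensor ![Pmy, Pmy, Pmy],
    tensor ![Ppy, Ppy, Pmy], tensor ![Ppy, Pmy, Ppy],
    tensor ![Ppy, Ppx, Ppx], tensor ![Ppy, Pmx, Pmx],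
    tensor ![Pmy, Ppx, Pmx], tensor ![Pmy, Pmx, Ppx],
    tensor ![Pmx, Ppy, Pmx], tensor ![Pmx, Pmy, Ppx],
    tensor ![Ppx, Ppy, Ppx], tensor ![Ppx, Pmy, Pmx],
    tensor ![Ppx, Ppx, Ppy], tensor ![Ppx, Pmx, Pmy],
    tensor ![Pmx, Ppx, Pmy], tensor ![Pmx, Pmx, Ppy]]

/-!
Write each factor projector as `(1 + s σ) / 2` with `s = ±1`. The sixteen projectors fall into
four groups of four sharing a Pauli pattern `σ₁σ₂σ₃` (`YYY`, `YXX`, `XYX`, `XXY`), and in each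
group the sign triples are exactly those with a fixed product `ε` (`-1` for `YYY`, `+1` otherwise).
Expanding the tensor products, every term involving only one or two of the signs cancels over such a
group, leaving `(1 + ε σ₁ ⊗ σ₂ ⊗ σ₃) / 2`. Summing the groups gives
`2 + (XXY + XYX + YXX - YYY) / 2`, and `XXY + XYX + YXX - YYY` is the expansion of
`((X + iY)^⊗3 - (X - iY)^⊗3) / (2i) = M₃`.
-/

def eigenProj (s : ℂ) (A : Matrix (Fin 2) (Fin 2) ℂ) : Matrix (Fin 2) (Fin 2) ℂ :=
  (1 / 2 : ℂ) • (1 + s • A)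

lemma Ppx_eq_eigenProj : Ppx = eigenProj 1 pauliX := by
  rw [Ppx, eigenProj, one_smul]

lemma Pmx_eq_eigenProj : Pmx = eigenProj (-1) pauliX := by
  rw [Pmx, eigenProj, neg_one_smul, sub_eq_add_neg]

lemma Ppy_eq_eigenProj : Ppy = eigenProj 1 pauliY := by
  rw [Ppy, eigenProj, one_smul]

lemma Pmy_eq_eigenProj : Pmy = eigenProj (-1) pauliY := by
  rw [Pmy, eigenProj, neg_one_smul, sub_eq_add_neg]

lemma tensor_one (n : ℕ) : tensor (fun _ : Fin n => 1) = 1 := by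
  ext f g
  by_cases h : f = g
  · subst h
    simp [tensor]
  · obtain ⟨j, hj⟩ := Function.ne_iff.mp h
    rw [tensor, of_apply, one_apply_ne h]
    exact Finset.prod_eq_zero (Finset.mem_univ j) (one_apply_ne hj)

lemma tensor_three_apply (A : Fin 3 → Matrix (Fin 2) (Fin 2) ℂ) (f g : Fin 3 → Fin 2) :
    tensor A f g = A 0 (f 0) (g 0) * A 1 (f 1) (g 1) * A 2 (f 2) (g 2) := by
  rw [tensor, of_apply, Fin.prod_univ_three]

lemma sum_tensor_eigenProj_of_sign_prod (A B C : Matrix (Fin 2) (Fin 2) ℂ) (ε : ℂ) :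
    tensor ![eigenProj 1 A, eigenProj 1 B, eigenProj ε C]
      + tensor ![eigenProj 1 A, eigenProj (-1) B, eigenProj (-ε) C]
      + tensor ![eigenProj (-1) A, eigenProj 1 B, eigenProj (-ε) C]
      + tensor ![eigenProj (-1) A, eigenProj (-1) B, eigenProj ε C]
      = (1 / 2 : ℂ) • (1 + ε • tensor ![A, B, C]) := by
  rw [← tensor_one]
  ext f g
  simp only [eigenProj, Matrix.add_apply, Matrix.smul_apply, tensor_three_apply, smul_eq_mul,
    cons_val_zero, cons_val_one, cons_val_two, head_cons, tail_cons]
  ring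

lemma one_div_two_I_mul_cube_sub_cube (a b c d e f : ℂ) :
    1 / (2 * Complex.I) * ((a + Complex.I * b) * (c + Complex.I * d) * (e + Complex.I * f)
      - (a - Complex.I * b) * (c - Complex.I * d) * (e - Complex.I * f))
      = a * c * f + a * d * e + b * c * e - b * d * f := by
  field_simp
  linear_combination (2 * Complex.I * b * d * f) * Complex.I_sq

lemma MABK_three :
    MABK 3 = tensor ![pauliX, pauliX, pauliY] + tensor ![pauliX, pauliY, pauliX]
      + tensor ![pauliY, pauliX, pauliX] - tensor ![pauliY, pauliY, pauliY] := by
  ext f g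
  simp only [MABK, Matrix.smul_apply, Matrix.sub_apply, Matrix.add_apply, tensor_three_apply,
    smul_eq_mul, cons_val_zero, cons_val_one, cons_val_two, head_cons, tail_cons]
  exact one_div_two_I_mul_cube_sub_cube _ _ _ _ _ _

theorem mu3_eq_MABK3 :
    ∑ k : Fin 16, Proj3 k
      = (1 / 2 : ℂ) • MABK 3
        + (2 : ℂ) • (1 : Matrix (Fin 3 → Fin 2) (Fin 3 → Fin 2) ℂ) := by
  have hYYY := sum_tensor_eigenProj_of_sign_prod pauliY pauliY pauliY (-1)
  have hYXX := sum_tensor_eigenProj_of_sign_prod pauliY pauliX pauliX 1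
  have hXYX := sum_tensor_eigenProj_of_sign_prod pauliX pauliY pauliX 1
  have hXXY := sum_tensor_eigenProj_of_sign_prod pauliX pauliX pauliY 1
  rw [neg_neg] at hYYY
  simp only [Proj3, Fin.sum_univ_succ, Fin.sum_univ_zero, cons_val_zero, cons_val_succ, add_zero,
    Ppx_eq_eigenProj, Pmx_eq_eigenProj, Ppy_eq_eigenProj, Pmy_eq_eigenProj, MABK_three]
  linear_combination (norm := module) hYYY + hYXX + hXYX + hXXY
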